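/- arXiv:1310.1684 — 2 statements merged into one kernel-verified Lean document; each statement's English description precedes it below -/
import Mathlib

section
/- Fix an integer p ≥ 1 and define I : M_p(ℂ) → [0,∞] by I(v) = −log det(I_p − vvᴴ) if I_p − vvᴴ is positive definite, and I(v) = ∞ otherwise. Then I is a good rate function: I is lower semicontinuous on M_p(ℂ), and for every real a ≥ 0 the sublevel set {v ∈ M_p(ℂ) : I(v) ≤ a} is compact. -/
open MeasureTheory Matrix Filter
open scoped ComplexOrder Classical ENNReal

/-- The rate function `I(v) = -log det(I - vvᴴ)` if `I - vvᴴ` is positive definite,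
`+∞` otherwise, with values in the extended nonnegative reals `[0, ∞]`. -/
noncomputable def rateI (p : ℕ) (v : Matrix (Fin p) (Fin p) ℂ) : ℝ≥0∞ :=
  if ((1 : Matrix (Fin p) (Fin p) ℂ) - v * vᴴ).PosDef then
    ENNReal.ofReal (- Real.log (((1 : Matrix (Fin p) (Fin p) ℂ) - v * vᴴ).det.re))
  else ⊤

/-!
`I` is `A ↦ -log det A` (set to `∞` off the positive definite cone) composed with the continuous
map `v ↦ 1 - v vᴴ`. Since a positive semidefinite matrix with nonzero determinant is positive
definite, `{-log det ≤ a}` is the closed set `{A ⪰ 0, det A ≥ e^{-a}}`, which gives lower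
semicontinuity. Every finite sublevel set of `I` lies in `{v | v vᴴ ≤ 1}`, which is closed and
bounded because the diagonal of `1 - v vᴴ` bounds the rows of `v`.
-/

open Set
open scoped NNReal

namespace Matrix

variable {m n 𝕜 : Type*} [Fintype m] [RCLike 𝕜]

theorem isClosed_setOf_posSemidef [Fintype n] : IsClosed {A : Matrix n n 𝕜 | A.PosSemidef} := by
  simp only [posSemidef_iff_dotProduct_mulVec, ofPred_and, ofPred_forall]
  exact (isClosed_eq continuous_id.matrix_conjTranspose continuous_id).inter
    (isClosed_iInter fun x => isClosed_le continuous_const (by fun_prop))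

theorem continuous_one_sub_mul_conjTranspose [DecidableEq n] :
    Continuous fun v : Matrix n m 𝕜 => 1 - v * vᴴ := by
  fun_prop

theorem norm_apply_le_one_of_posSemidef_one_sub_mul_conjTranspose [DecidableEq n]
    {v : Matrix n m 𝕜} (h : (1 - v * vᴴ).PosSemidef) (i : n) (j : m) : ‖v i j‖ ≤ 1 := by
  have hrow : ∑ k, ‖v i k‖ ^ 2 ≤ 1 := by
    have := h.diag_nonneg (i := i)
    simp only [sub_apply, one_apply_eq, mul_apply, conjTranspose_apply, RCLike.star_def,
      RCLike.mul_conj] at this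
    exact_mod_cast sub_nonneg.mp this
  have hj : ‖v i j‖ ^ 2 ≤ ∑ k, ‖v i k‖ ^ 2 :=
    Finset.single_le_sum (fun k _ => sq_nonneg ‖v i k‖) (Finset.mem_univ j)
  exact (sq_le_one_iff₀ (norm_nonneg _)).mp (hj.trans hrow)

theorem isCompact_setOf_posSemidef_one_sub_mul_conjTranspose [Fintype n] [DecidableEq n] :
    IsCompact {v : Matrix n m 𝕜 | (1 - v * vᴴ).PosSemidef} := by
  have hball :
      IsCompact (univ.pi fun _ : n => univ.pi fun _ : m => Metric.closedBall (0 : 𝕜) 1) :=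
    isCompact_univ_pi fun _ => isCompact_univ_pi fun _ => isCompact_closedBall 0 1
  refine hball.of_isClosed_subset
    (isClosed_setOf_posSemidef.preimage continuous_one_sub_mul_conjTranspose)
    fun v hv i _ j _ => ?_
  simpa using norm_apply_le_one_of_posSemidef_one_sub_mul_conjTranspose hv i j

section negLogDet

variable [Fintype n] [DecidableEq n]

noncomputable def negLogDet (A : Matrix n n 𝕜) : ℝ≥0∞ :=
  if A.PosDef then ENNReal.ofReal (-Real.log (RCLike.re A.det)) else ⊤

theorem negLogDet_le_coe_iff {A : Matrix n n 𝕜} {a : ℝ≥0} :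
    negLogDet A ≤ a ↔ A.PosSemidef ∧ Real.exp (-a) ≤ RCLike.re A.det := by
  by_cases hA : A.PosDef
  · have hdet : 0 < RCLike.re A.det := (RCLike.pos_iff.mp hA.det_pos).1
    rw [negLogDet, if_pos hA, ENNReal.ofReal_le_iff_le_toReal ENNReal.coe_ne_top,
      ENNReal.coe_toReal, ← Real.le_log_iff_exp_le hdet, neg_le]
    exact (and_iff_right hA.posSemidef).symm
  · rw [negLogDet, if_neg hA, top_le_iff, iff_false_intro ENNReal.coe_ne_top, false_iff]
    rintro ⟨hpsd, hexp⟩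
    refine hA (hpsd.posDef_iff_det_ne_zero.mpr fun hzero => ?_)
    rw [hzero, map_zero] at hexp
    exact (Real.exp_pos _).not_ge hexp

theorem lowerSemicontinuous_negLogDet :
    LowerSemicontinuous (negLogDet : Matrix n n 𝕜 → ℝ≥0∞) := by
  refine lowerSemicontinuous_iff_isClosed_preimage.mpr fun y => ?_
  induction y using ENNReal.recTopCoe with
  | top => simp
  | coe a =>
    simp only [preimage, mem_Iic, negLogDet_le_coe_iff, ofPred_and]
    exact isClosed_setOf_posSemidef.inter
      (isClosed_le continuous_const (RCLike.continuous_re.comp continuous_id.matrix_det))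

end negLogDet

end Matrix

theorem rateI_isGoodRateFunction_general (p : ℕ) :
    LowerSemicontinuous (rateI p) ∧
      ∀ a : ℝ, 0 ≤ a → IsCompact {v : Matrix (Fin p) (Fin p) ℂ | rateI p v ≤ ENNReal.ofReal a} := by
  -- `rateI p` is definitionally `negLogDet ∘ fun v => 1 - v * vᴴ`.
  have hlsc : LowerSemicontinuous (rateI p) :=
    lowerSemicontinuous_negLogDet.comp continuous_one_sub_mul_conjTranspose
  refine ⟨hlsc, fun a _ => isCompact_setOf_posSemidef_one_sub_mul_conjTranspose.of_isClosed_subset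
    (hlsc.isClosed_preimage _) fun v hv => (negLogDet_le_coe_iff.mp hv).1⟩

/-- The rate function `I(v) = -log det(I - vvᴴ)` (with `I(v) = ∞` when
`I - vvᴴ` is not positive definite) is a good rate function: it is lower semicontinuous on
`M_p(ℂ)` and all its sublevel sets `{v : I v ≤ a}`, for real `a ≥ 0`, are compact. -/
theorem rateI_isGoodRateFunction (p : ℕ) (hp : 1 ≤ p) :
    LowerSemicontinuous (rateI p) ∧
      ∀ a : ℝ, 0 ≤ a → IsCompact {v : Matrix (Fin p) (Fin p) ℂ | rateI p v ≤ ENNReal.ofReal a} :=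
  rateI_isGoodRateFunction_general p
end

section
/- Let 1 ≤ p ≤ N, let ε be an N×p complex matrix with εᴴε = I_p, and let U be an N×N unitary matrix. Set α = (εᴴUε)ᴴ and assume I_p − ααᴴ is positive definite. Let ρ^R = (I_p − ααᴴ)^{1/2}, ρ^L = (I_p − αᴴα)^{1/2} (positive semidefinite square roots) and ξ = (Uε − εαᴴ)·(ρ^R)⁻¹. Define the N×N matrix V = (ε·αᴴ + ξ·ρ^R)·εᴴ + (ε·ρ^L − ξ·α)·ξᴴ + (I_N − ε·εᴴ − ξ·ξᴴ). Then: (1) V is unitary; (2) V·ε = U·ε; (3) consequently W := Vᴴ·U is unitary and W·ε = ε. -/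
open Matrix
open scoped ComplexOrder

/-- The square root of a positive semidefinite matrix, as defined in Mathlib (Dec 2024),
since removed from Mathlib. -/
noncomputable def Matrix.PosSemidef.sqrt {n : Type*} [Fintype n] [DecidableEq n] {𝕜 : Type*}
    [RCLike 𝕜] {A : Matrix n n 𝕜} (hA : A.PosSemidef) : Matrix n n 𝕜 :=
  hA.isHermitian.eigenvectorUnitary.1 * diagonal ((↑) ∘ (√·) ∘ hA.isHermitian.eigenvalues) *
    (star hA.isHermitian.eigenvectorUnitary : Matrix n n 𝕜)

/-!
Write `E = [ε ξ]` and `Θ = [[αᴴ, ρL], [ρR, -α]]`, so that `V = E Θ Eᴴ + (1 - E Eᴴ)`. Since `ξ` is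
built from the component of `Uε` orthogonal to `ε` and `ξᴴξ = ρR⁻¹ (1 - ααᴴ) ρR⁻¹ = 1`, the
matrix `E` is an isometry, and then `V` is unitary as soon as `Θ` is. The matrix `Θ` is the Halmos
unitary dilation of the contraction `αᴴ`: its unitarity comes down to the intertwining
`α ρL = ρR α`, which follows from `α (1 - αᴴα) = (1 - ααᴴ) α` because the functional calculus of
Hermitian matrices respects intertwinings (compare entries in eigenbases). Finally
`Vε = εαᴴ + ξρR = Uε` by the definition of `ξ`, and `W = VᴴU` fixes `ε` because `Vᴴ V = 1`.
-/

open scoped MatrixOrder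

namespace Matrix

section Hermitian

variable {m n 𝕜 : Type*} [Fintype m] [Fintype n] [DecidableEq m] [DecidableEq n] [RCLike 𝕜]

-- The ascriptions `: n → 𝕜` are needed: without them these rectangular products elaborate
-- through the default `HMul` instance of `CStarMatrix`, and matrix lemmas no longer apply.
lemma mul_diagonal_comp_eq_diagonal_comp_mul {Y : Matrix m n 𝕜} {d : m → ℝ} {e : n → ℝ}
    (h : Y * diagonal (RCLike.ofReal ∘ e : n → 𝕜) = diagonal (RCLike.ofReal ∘ d : m → 𝕜) * Y)
    (f : ℝ → ℝ) :
    Y * diagonal (RCLike.ofReal ∘ f ∘ e : n → 𝕜) =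
      diagonal (RCLike.ofReal ∘ f ∘ d : m → 𝕜) * Y := by
  refine Matrix.ext fun i j ↦ ?_
  have hij := congrArg (fun A : Matrix m n 𝕜 ↦ A i j) h
  simp only [mul_diagonal, diagonal_mul, Function.comp_apply] at hij ⊢
  by_cases hY : Y i j = 0
  · simp [hY]
  · have : e j = d i := by exact_mod_cast mul_left_cancel₀ hY (hij.trans (mul_comm _ _))
    rw [this, mul_comm]

lemma mul_conj_eq_conj_mul_iff {u : Matrix m m 𝕜} {w : Matrix n n 𝕜} (hu : u ∈ unitaryGroup m 𝕜)
    (hw : w ∈ unitaryGroup n 𝕜) (X : Matrix m n 𝕜) (P : Matrix m m 𝕜) (Q : Matrix n n 𝕜) :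
    X * (w * Q * star w) = u * P * star u * X ↔
      star u * X * w * Q = P * (star u * X * w) := by
  have hu₁ (Z : Matrix m n 𝕜) : star u * (u * Z) = Z := by
    rw [← Matrix.mul_assoc, Unitary.star_mul_self_of_mem hu, Matrix.one_mul]
  have hu₂ (Z : Matrix m n 𝕜) : u * (star u * Z) = Z := by
    rw [← Matrix.mul_assoc, Unitary.mul_star_self_of_mem hu, Matrix.one_mul]
  have hw₁ : star w * w = 1 := Unitary.star_mul_self_of_mem hw
  have hw₂ : w * star w = 1 := Unitary.mul_star_self_of_mem hw
  have hL : X * (w * Q * star w) = u * (star u * X * w * Q) * star w := by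
    simp only [Matrix.mul_assoc, hu₂]
  have hR : u * P * star u * X = u * (P * (star u * X * w)) * star w := by
    simp only [Matrix.mul_assoc, hw₂, Matrix.mul_one]
  rw [hL, hR]
  refine ⟨fun h ↦ ?_, fun h ↦ by rw [h]⟩
  simpa only [Matrix.mul_assoc, hu₁, hw₁, Matrix.mul_one] using congrArg (star u * · * w) h

theorem IsHermitian.mul_cfc_eq_cfc_mul {M : Matrix m m 𝕜} {N : Matrix n n 𝕜} {X : Matrix m n 𝕜}
    (hM : M.IsHermitian) (hN : N.IsHermitian) (h : X * N = M * X) (f : ℝ → ℝ) :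
    X * cfc f N = cfc f M * X := by
  have hu := hM.eigenvectorUnitary.2
  have hw := hN.eigenvectorUnitary.2
  rw [hM.spectral_theorem, hN.spectral_theorem, Unitary.conjStarAlgAut_apply,
    Unitary.conjStarAlgAut_apply, mul_conj_eq_conj_mul_iff hu hw] at h
  rw [hM.cfc_eq, hN.cfc_eq, IsHermitian.cfc, IsHermitian.cfc, Unitary.conjStarAlgAut_apply,
    Unitary.conjStarAlgAut_apply, mul_conj_eq_conj_mul_iff hu hw]
  exact mul_diagonal_comp_eq_diagonal_comp_mul h f

namespace PosSemidef

variable {A M : Matrix m m 𝕜} {N : Matrix n n 𝕜}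

lemma sqrt_eq_cfc (hA : A.PosSemidef) : hA.sqrt = cfc Real.sqrt A := by
  rw [hA.isHermitian.cfc_eq]
  rfl

lemma sqrt_eq_cfcSqrt (hA : A.PosSemidef) : hA.sqrt = CFC.sqrt A := by
  rw [sqrt_eq_cfc, CFC.sqrt_eq_real_sqrt A hA.nonneg, cfcₙ_eq_cfc]

lemma conjTranspose_sqrt (hA : A.PosSemidef) : hA.sqrtᴴ = hA.sqrt := by
  rw [sqrt_eq_cfcSqrt]
  exact (CFC.sqrt_nonneg A).isSelfAdjoint

lemma sqrt_mul_self (hA : A.PosSemidef) : hA.sqrt * hA.sqrt = A := by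
  rw [sqrt_eq_cfcSqrt, CFC.sqrt_mul_sqrt_self A hA.nonneg]

lemma mul_sqrt_eq_sqrt_mul {X : Matrix m n 𝕜} (hM : M.PosSemidef) (hN : N.PosSemidef)
    (h : X * N = M * X) : X * hN.sqrt = hM.sqrt * X := by
  rw [sqrt_eq_cfc, sqrt_eq_cfc]
  exact hM.isHermitian.mul_cfc_eq_cfc_mul hN.isHermitian h Real.sqrt

end PosSemidef

lemma PosDef.isUnit_det_sqrt {A : Matrix m m 𝕜} (hA : A.PosDef) :
    IsUnit hA.posSemidef.sqrt.det := by
  have h := (isUnit_iff_isUnit_det _).mp hA.isUnit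
  rw [← hA.posSemidef.sqrt_mul_self, det_mul] at h
  exact (IsUnit.mul_iff.mp h).1

lemma fromBlocks_defect_mem_unitaryGroup {α : Matrix m m 𝕜} (h₁ : (1 - α * αᴴ).PosSemidef)
    (h₂ : (1 - αᴴ * α).PosSemidef) :
    fromBlocks αᴴ h₂.sqrt h₁.sqrt (-α) ∈ unitaryGroup (m ⊕ m) 𝕜 := by
  have hα : α * h₂.sqrt = h₁.sqrt * α :=
    h₁.mul_sqrt_eq_sqrt_mul h₂ (by simp only [Matrix.mul_sub, Matrix.sub_mul, Matrix.mul_one,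
      Matrix.one_mul, Matrix.mul_assoc])
  have hα' : h₂.sqrt * αᴴ = αᴴ * h₁.sqrt := by
    simpa only [conjTranspose_mul, h₁.conjTranspose_sqrt, h₂.conjTranspose_sqrt]
      using congrArg conjTranspose hα
  rw [mem_unitaryGroup_iff', star_eq_conjTranspose, fromBlocks_conjTranspose, fromBlocks_multiply,
    conjTranspose_conjTranspose, conjTranspose_neg, h₁.conjTranspose_sqrt, h₂.conjTranspose_sqrt,
    h₁.sqrt_mul_self, h₂.sqrt_mul_self, hα, hα', ← fromBlocks_one]
  congr 1 <;> noncomm_ring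

end Hermitian

section Isometry

variable {m k R : Type*} [Fintype m] [Fintype k] [CommRing R] [StarRing R]

lemma conjTranspose_mul_self_mul_inv_eq_one [DecidableEq k] {ρ : Matrix k k R}
    {D : Matrix m k R} (hρ : ρᴴ = ρ) (hdet : IsUnit ρ.det) (hD : Dᴴ * D = ρ * ρ) :
    (D * ρ⁻¹)ᴴ * (D * ρ⁻¹) = 1 := by
  calc (D * ρ⁻¹)ᴴ * (D * ρ⁻¹) = ρ⁻¹ * (Dᴴ * D) * ρ⁻¹ := by
        rw [conjTranspose_mul, conjTranspose_nonsing_inv, hρ]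
        simp only [Matrix.mul_assoc]
    _ = (ρ⁻¹ * ρ) * (ρ * ρ⁻¹) := by rw [hD]; simp only [Matrix.mul_assoc]
    _ = 1 := by rw [nonsing_inv_mul _ hdet, mul_nonsing_inv _ hdet, Matrix.one_mul]

lemma mul_mul_conjTranspose_add_one_sub_mem_unitaryGroup [DecidableEq m] [DecidableEq k]
    {E : Matrix m k R} {Θ : Matrix k k R} (hE : Eᴴ * E = 1) (hΘ : Θ ∈ unitaryGroup k R) :
    E * Θ * Eᴴ + (1 - E * Eᴴ) ∈ unitaryGroup m R := by
  have hE' (Z : Matrix k m R) : Eᴴ * (E * Z) = Z := by rw [← Matrix.mul_assoc, hE, Matrix.one_mul]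
  have hΘ' (Z : Matrix k m R) : Θᴴ * (Θ * Z) = Z := by
    rw [← Matrix.mul_assoc, ← star_eq_conjTranspose, Unitary.star_mul_self_of_mem hΘ,
      Matrix.one_mul]
  have hPP : E * Eᴴ * (E * Eᴴ) = E * Eᴴ := by simp only [Matrix.mul_assoc, hE']
  have hQP : E * Θᴴ * Eᴴ * (E * Eᴴ) = E * Θᴴ * Eᴴ := by simp only [Matrix.mul_assoc, hE']
  have hPQ : E * Eᴴ * (E * Θ * Eᴴ) = E * Θ * Eᴴ := by simp only [Matrix.mul_assoc, hE']
  have hQQ : E * Θᴴ * Eᴴ * (E * Θ * Eᴴ) = E * Eᴴ := by simp only [Matrix.mul_assoc, hE', hΘ']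
  rw [mem_unitaryGroup_iff', star_eq_conjTranspose]
  simp only [conjTranspose_add, conjTranspose_sub, conjTranspose_mul, conjTranspose_one,
    conjTranspose_conjTranspose, ← Matrix.mul_assoc]
  simp only [Matrix.add_mul, Matrix.mul_add, Matrix.sub_mul, Matrix.mul_sub, Matrix.mul_one,
    Matrix.one_mul, hPP, hQP, hPQ, hQQ]
  abel

lemma conjTranspose_mul_sub_compression_eq_zero [DecidableEq k] {ε : Matrix m k R}
    (hε : εᴴ * ε = 1) (U : Matrix m m R) : εᴴ * (U * ε - ε * (εᴴ * U * ε)) = 0 := by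
  rw [Matrix.mul_sub, ← Matrix.mul_assoc εᴴ ε, hε, Matrix.one_mul, Matrix.mul_assoc, sub_self]

lemma conjTranspose_mul_self_sub_compression [DecidableEq m] [DecidableEq k] {ε : Matrix m k R}
    {U : Matrix m m R} (hε : εᴴ * ε = 1) (hU : Uᴴ * U = 1) :
    (U * ε - ε * (εᴴ * U * ε))ᴴ * (U * ε - ε * (εᴴ * U * ε)) =
      1 - (εᴴ * U * ε)ᴴ * (εᴴ * U * ε) := by
  have hε' (Z : Matrix k k R) : εᴴ * (ε * Z) = Z := by rw [← Matrix.mul_assoc, hε, Matrix.one_mul]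
  have hU' (Z : Matrix m k R) : Uᴴ * (U * Z) = Z := by rw [← Matrix.mul_assoc, hU, Matrix.one_mul]
  simp only [conjTranspose_sub, conjTranspose_mul, conjTranspose_conjTranspose, Matrix.sub_mul,
    Matrix.mul_sub, Matrix.mul_assoc, hε', hU', hε]
  abel

lemma orthonormal_sub_compression_mul_inv [DecidableEq m] [DecidableEq k] {ε : Matrix m k R}
    {U : Matrix m m R} {ρ : Matrix k k R} (hε : εᴴ * ε = 1) (hU : Uᴴ * U = 1) (hρ : ρᴴ = ρ)
    (hdet : IsUnit ρ.det) (hρρ : ρ * ρ = 1 - (εᴴ * U * ε)ᴴ * (εᴴ * U * ε)) :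
    εᴴ * ((U * ε - ε * (εᴴ * U * ε)) * ρ⁻¹) = 0 ∧
      ((U * ε - ε * (εᴴ * U * ε)) * ρ⁻¹)ᴴ * ((U * ε - ε * (εᴴ * U * ε)) * ρ⁻¹) = 1 := by
  refine ⟨?_, conjTranspose_mul_self_mul_inv_eq_one hρ hdet ?_⟩
  · rw [← Matrix.mul_assoc, conjTranspose_mul_sub_compression_eq_zero hε, Matrix.zero_mul]
  · rw [hρρ, conjTranspose_mul_self_sub_compression hε hU]

end Isometry

end Matrix

theorem deflation_step_general (p N : ℕ)
    (ε : Matrix (Fin N) (Fin p) ℂ) (hε : εᴴ * ε = 1)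
    (U : Matrix (Fin N) (Fin N) ℂ) (hU : U ∈ Matrix.unitaryGroup (Fin N) ℂ)
    (α : Matrix (Fin p) (Fin p) ℂ) (hα : α = (εᴴ * U * ε)ᴴ)
    (hpd : ((1 : Matrix (Fin p) (Fin p) ℂ) - α * αᴴ).PosDef)
    (h2 : ((1 : Matrix (Fin p) (Fin p) ℂ) - αᴴ * α).PosSemidef)
    (ρR ρL : Matrix (Fin p) (Fin p) ℂ) (ξ : Matrix (Fin N) (Fin p) ℂ)
    (V : Matrix (Fin N) (Fin N) ℂ)
    (hρR : ρR = hpd.posSemidef.sqrt) (hρL : ρL = h2.sqrt)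
    (hξ : ξ = (U * ε - ε * αᴴ) * ρR⁻¹)
    (hV : V = (ε * αᴴ + ξ * ρR) * εᴴ + (ε * ρL - ξ * α) * ξᴴ + (1 - ε * εᴴ - ξ * ξᴴ)) :
    V ∈ Matrix.unitaryGroup (Fin N) ℂ ∧
      V * ε = U * ε ∧
      Vᴴ * U ∈ Matrix.unitaryGroup (Fin N) ℂ ∧
      (Vᴴ * U) * ε = ε := by
  have hαH : αᴴ = εᴴ * U * ε := by rw [hα, conjTranspose_conjTranspose]
  have hdet : IsUnit ρR.det := by rw [hρR]; exact hpd.isUnit_det_sqrt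
  have hξρR : ξ * ρR = U * ε - ε * αᴴ := by
    rw [hξ, Matrix.mul_assoc, nonsing_inv_mul _ hdet, Matrix.mul_one]
  obtain ⟨hεξ, hξξ⟩ : εᴴ * ξ = 0 ∧ ξᴴ * ξ = 1 := by
    rw [hξ, hαH]
    refine orthonormal_sub_compression_mul_inv hε (mem_unitaryGroup_iff'.mp hU)
      (by rw [hρR, hpd.posSemidef.conjTranspose_sqrt]) hdet ?_
    rw [hρR, hpd.posSemidef.sqrt_mul_self, hα, conjTranspose_conjTranspose]
  have hξε : ξᴴ * ε = 0 := by
    rw [← conjTranspose_conjTranspose ε, ← conjTranspose_mul, hεξ, conjTranspose_zero]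
  have hE : (fromCols ε ξ)ᴴ * fromCols ε ξ = 1 := by
    rw [conjTranspose_fromCols_eq_fromRows_conjTranspose, fromRows_mul_fromCols, hε, hεξ, hξε,
      hξξ, fromBlocks_one]
  have hVE : V = fromCols ε ξ * fromBlocks αᴴ ρL ρR (-α) * (fromCols ε ξ)ᴴ +
      (1 - fromCols ε ξ * (fromCols ε ξ)ᴴ) := by
    rw [hV, conjTranspose_fromCols_eq_fromRows_conjTranspose, fromCols_mul_fromBlocks,
      fromCols_mul_fromRows, fromCols_mul_fromRows, Matrix.mul_neg, sub_sub, sub_eq_add_neg]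
  have hVu : V ∈ unitaryGroup (Fin N) ℂ := by
    rw [hVE, hρR, hρL]
    exact mul_mul_conjTranspose_add_one_sub_mem_unitaryGroup hE
      (fromBlocks_defect_mem_unitaryGroup hpd.posSemidef h2)
  have hVε : V * ε = U * ε := by
    simp only [hV, Matrix.add_mul, Matrix.sub_mul, Matrix.mul_assoc, hε, hξε, Matrix.mul_one,
      Matrix.mul_zero, Matrix.one_mul, hξρR]
    abel
  refine ⟨hVu, hVε, mul_mem (Unitary.star_mem hVu) hU, ?_⟩
  rw [Matrix.mul_assoc, ← hVε, ← Matrix.mul_assoc, ← star_eq_conjTranspose,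
    Unitary.star_mul_self_of_mem hVu, Matrix.one_mul]

/-- Let `1 ≤ p ≤ N`, `εᴴε = I_p`, `U` unitary, `α = (εᴴUε)ᴴ` with
`I_p - ααᴴ` positive definite, `ρ^R = (I_p - ααᴴ)^{1/2}`, `ρ^L = (I_p - αᴴα)^{1/2}` and
`ξ = (Uε - εαᴴ)(ρ^R)⁻¹`.  Then
`V = (εαᴴ + ξρ^R)εᴴ + (ερ^L - ξα)ξᴴ + (I_N - εεᴴ - ξξᴴ)` is unitary, `Vε = Uε`, and
consequently `W = VᴴU` is unitary and fixes `ε`. -/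
theorem deflation_step (p N : ℕ) (hp : 1 ≤ p) (hpN : p ≤ N)
    (ε : Matrix (Fin N) (Fin p) ℂ) (hε : εᴴ * ε = 1)
    (U : Matrix (Fin N) (Fin N) ℂ) (hU : U ∈ Matrix.unitaryGroup (Fin N) ℂ)
    (α : Matrix (Fin p) (Fin p) ℂ) (hα : α = (εᴴ * U * ε)ᴴ)
    (hpd : ((1 : Matrix (Fin p) (Fin p) ℂ) - α * αᴴ).PosDef)
    (h2 : ((1 : Matrix (Fin p) (Fin p) ℂ) - αᴴ * α).PosSemidef)
    (ρR ρL : Matrix (Fin p) (Fin p) ℂ) (ξ : Matrix (Fin N) (Fin p) ℂ)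
    (V : Matrix (Fin N) (Fin N) ℂ)
    (hρR : ρR = hpd.posSemidef.sqrt) (hρL : ρL = h2.sqrt)
    (hξ : ξ = (U * ε - ε * αᴴ) * ρR⁻¹)
    (hV : V = (ε * αᴴ + ξ * ρR) * εᴴ + (ε * ρL - ξ * α) * ξᴴ + (1 - ε * εᴴ - ξ * ξᴴ)) :
    V ∈ Matrix.unitaryGroup (Fin N) ℂ ∧
      V * ε = U * ε ∧
      Vᴴ * U ∈ Matrix.unitaryGroup (Fin N) ℂ ∧
      (Vᴴ * U) * ε = ε :=
  deflation_step_general p N ε hε U hU α hα hpd h2 ρR ρL ξ V hρR hρL hξ hV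
end
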